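/- arXiv:2308.08999 — 3 statements merged into one kernel-verified Lean document; each statement's English description precedes it below -/
import Mathlib

section
/- Let (R, m) be a commutative Noetherian local ring, let T be a finitely generated R-module, and let M be an R-submodule of T such that m·(M :_T m) is not contained in m·M (i.e., M is a Burch submodule of T). Then the m-adic completion M̂ is a Burch submodule of T̂ over the completion R̂; in particular, M̂ is a Burch R̂-module. -/
noncomputable section

open CategoryTheory IsLocalRing

/-- The Ext group `Ext^i_R(M, N)` of two `R`-modules. -/
abbrev ExtMod (R : Type) [CommRing R] (M N : Type) [AddCommGroup M] [Module R M]
    [AddCommGroup N] [Module R N] (i : ℕ) : ModuleCat R :=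
  ((Ext R (ModuleCat R) i).obj (Opposite.op (ModuleCat.of R M))).obj (ModuleCat.of R N)

/-- An `R`-module `M` is rigid if `Ext¹_R(M,M) = 0`. -/
def IsRigid (R : Type) [CommRing R] (M : Type) [AddCommGroup M] [Module R M] : Prop :=
  Subsingleton (ExtMod R M M 1)

/-- `M` is torsion-free: every non-zerodivisor of `R` acts injectively on `M`. -/
def IsTorsionFreeMod (R : Type) [CommRing R] (M : Type) [AddCommGroup M] [Module R M] : Prop :=
  ∀ r ∈ nonZeroDivisors R, ∀ x : M, r • x = 0 → x = 0

/-- The colon submodule `(N :_T I) = { t ∈ T | I • t ⊆ N }`. -/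
def colonSubmodule (R : Type) [CommRing R] {T : Type} [AddCommGroup T] [Module R T]
    (N : Submodule R T) (I : Ideal R) : Submodule R T where
  carrier := {t | ∀ r ∈ I, r • t ∈ N}
  add_mem' := fun {a b} ha hb r hr => by rw [smul_add]; exact N.add_mem (ha r hr) (hb r hr)
  zero_mem' := fun r hr => by rw [smul_zero]; exact N.zero_mem
  smul_mem' := fun c {x} hx r hr => by rw [smul_comm]; exact N.smul_mem c (hx r hr)

/-- `N ⊆ T` is a Burch submodule with respect to the ideal `I`
if `I • (N :_T I) ⊄ I • N`. -/
def IsBurchSubmoduleWrt (R : Type) [CommRing R] {T : Type} [AddCommGroup T] [Module R T]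
    (I : Ideal R) (N : Submodule R T) : Prop :=
  ¬ (I • colonSubmodule R N I ≤ I • N)

/-- `M` is a Burch `R`-module: it embeds in some module `T` such that
`m • (M :_T m) ⊄ m • M`, where `m` is the maximal ideal. -/
def IsBurch (R : Type) [CommRing R] [IsLocalRing R]
    (M : Type) [AddCommGroup M] [Module R M] : Prop :=
  ∃ (T : ModuleCat R) (ι : M →ₗ[R] T),
    Function.Injective ι ∧ IsBurchSubmoduleWrt R (maximalIdeal R) (LinearMap.range ι)

/-- `M` has rank `r`: the localization at every associated prime of `R`
is free of rank `r`. -/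
def HasRankN (R : Type) [CommRing R] (M : Type) [AddCommGroup M] [Module R M] (r : ℕ) : Prop :=
  ∀ (p : Ideal R) [p.IsPrime], p ∈ associatedPrimes R R →
    Nonempty ((LocalizedModule p.primeCompl M) ≃ₗ[Localization.AtPrime p]
      (Fin r → Localization.AtPrime p))

/-- The depth of a module over a local ring: the supremum of the lengths of
`M`-regular sequences contained in the maximal ideal. -/
def rdepth (R : Type) [CommRing R] [IsLocalRing R]
    (M : Type) [AddCommGroup M] [Module R M] : ℕ :=
  sSup {n | ∃ rs : List R, rs.length = n ∧ (∀ r ∈ rs, r ∈ maximalIdeal R) ∧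
    RingTheory.Sequence.IsRegular M rs}

/-- A (local) ring is Gorenstein if it has finite injective dimension over itself,
i.e. `Ext^i_R(N, R) = 0` for all `N` and all `i` large. -/
def IsGorensteinRing (R : Type) [CommRing R] : Prop :=
  ∃ n : ℕ, ∀ (N : ModuleCat R) (i : ℕ), n < i → Subsingleton (ExtMod R N R i)

/-- Projective dimension at most `n ∈ ℤ` (so that `pd M ≤ -1 ↔ M = 0`),
characterized by vanishing of `Ext^i(M, -)` for `i > n`. -/
def ProjDimLE (R : Type) [CommRing R] (M : Type) [AddCommGroup M] [Module R M] (n : ℤ) : Prop :=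
  ∀ (N : ModuleCat R) (i : ℕ), n < (i : ℤ) → Subsingleton (ExtMod R M N i)

/-- A finitely generated module `X` is totally reflexive if the canonical map to the
double dual is bijective and `Ext^i(X, R) = 0 = Ext^i(X*, R)` for all `i ≥ 1`. -/
def IsTotallyReflexive (R : Type) [CommRing R] (X : Type) [AddCommGroup X] [Module R X] : Prop :=
  Module.Finite R X ∧ Function.Bijective (Module.Dual.eval R X) ∧
    ∀ i : ℕ, 1 ≤ i →
      Subsingleton (ExtMod R X R i) ∧ Subsingleton (ExtMod R (Module.Dual R X) R i)

/-- Gorenstein dimension at most `n`: there is a resolution of length `n`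
by totally reflexive modules. -/
def GdimLE (R : Type) [CommRing R] : ℕ → (M : Type) → [AddCommGroup M] → [Module R M] → Prop
  | 0, M, _, _ => IsTotallyReflexive R M
  | n+1, M, _, _ => ∃ (X : ModuleCat R) (f : X →ₗ[R] M),
      IsTotallyReflexive R X ∧ Function.Surjective f ∧ GdimLE R n (LinearMap.ker f)

/-- A module is indecomposable if it is nonzero and admits no nontrivial
direct sum decomposition. -/
def IsIndecomposableMod (R : Type) [CommRing R] (M : Type) [AddCommGroup M] [Module R M] : Prop :=
  Nontrivial M ∧ ∀ A B : Submodule R M, IsCompl A B → A = ⊥ ∨ B = ⊥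

/-- A module `M` over `S` satisfies Serre's condition `(S_n)` if
`depth_{S_q}(M_q) ≥ min(n, dim S_q)` for every prime `q`. -/
def SatisfiesSn (S : Type) [CommRing S] (M : Type) [AddCommGroup M] [Module S M] (n : ℕ) : Prop :=
  ∀ (q : Ideal S) [q.IsPrime],
    min (n : WithBot (WithTop ℕ)) (ringKrullDim (Localization.AtPrime q)) ≤
      (rdepth (Localization.AtPrime q) (LocalizedModule q.primeCompl M) : WithBot (WithTop ℕ))

/-- A Noetherian local ring is regular if its maximal ideal can be generated by
`dim R` elements. -/
def IsRegularLocal (R : Type) [CommRing R] [IsLocalRing R] : Prop :=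
  ∃ s : Finset R, Ideal.span (s : Set R) = maximalIdeal R ∧
    (s.card : WithBot (WithTop ℕ)) = ringKrullDim R

/-- The module `ᵉR`: the abelian group `R` with `R`-action through the `e`-th
iterate of the Frobenius endomorphism. -/
def FrobModule (R : Type) [CommRing R] (p e : ℕ) : Type := R

instance (R : Type) [CommRing R] (p e : ℕ) : AddCommGroup (FrobModule R p e) :=
  inferInstanceAs (AddCommGroup R)

noncomputable instance (R : Type) [CommRing R] (p e : ℕ) [Fact p.Prime] [CharP R p] :
    Module R (FrobModule R p e) :=
  letI : ExpChar R p := .prime Fact.out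
  Module.compHom R (iterateFrobenius R p e)


/-!
A witness `x ∈ m (M :_T m) \ m M` remains a witness after completion. The map `T → T̂` carries
`M` into `M̂`, hence `(M :_T m)` into `(M̂ :_{T̂} m̂)`. Conversely `T̂ → (T / m M)^` kills `m̂ M̂`,
and `T / m M` is `m`-adically separated by Krull's intersection theorem, so the image of `x` can
lie in `m̂ M̂` only if `x ∈ m M`. Injectivity of `M̂ → T̂` is the Artin–Rees lemma.
-/

section ColonSubmodule

variable {R S : Type} [CommRing R] [CommRing S] [Algebra R S] {I : Ideal R}
  {T T' : Type} [AddCommGroup T] [Module R T] [AddCommGroup T'] [Module R T'] [Module S T']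
  [IsScalarTower R S T'] {P : Submodule R T} {P' : Submodule S T'} {g : T →ₗ[R] T'}

theorem Submodule.smul_le_comap_restrictScalars_map_smul
    (hg : P ≤ (P'.restrictScalars R).comap g) :
    I • P ≤ ((I.map (algebraMap R S) • P').restrictScalars R).comap g := by
  rw [Ideal.smul_restrictScalars, ← Submodule.map_le_iff_le_comap, Submodule.map_smul'']
  exact smul_mono_right I (Submodule.map_le_iff_le_comap.mpr hg)

theorem colonSubmodule_le_comap_restrictScalars_colonSubmodule
    (hg : P ≤ (P'.restrictScalars R).comap g) :
    colonSubmodule R P I ≤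
      ((colonSubmodule S P' (I.map (algebraMap R S))).restrictScalars R).comap g := by
  intro t ht s hs
  have hI : I.map (algebraMap R S) ≤ P'.comap (LinearMap.toSpanSingleton S T' (g t)) := by
    rw [Ideal.map_le_iff_le_comap]
    intro a ha
    simpa only [Ideal.mem_comap, Submodule.mem_comap, LinearMap.toSpanSingleton_apply,
      algebraMap_smul, ← map_smul, Submodule.restrictScalars_mem] using hg (ht a ha)
  exact hI hs

end ColonSubmodule

namespace AdicCompletion

variable {R : Type} [CommRing R] {I : Ideal R}
  {M N : Type} [AddCommGroup M] [Module R M] [AddCommGroup N] [Module R N]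

theorem smul_map_apply_eq_zero {r : R} {f : M →ₗ[R] N} (hf : ∀ x, r • f x = 0)
    (x : AdicCompletion I M) : r • map I f x = 0 := by
  ext n
  obtain ⟨y, hy⟩ := Submodule.Quotient.mk_surjective _ (x.val n)
  rw [val_smul_apply, map_val_apply, ← hy, LinearMap.reduceModIdeal_apply,
    ← Submodule.Quotient.mk_smul, hf, Submodule.Quotient.mk_zero, val_zero_apply]

theorem smul_range_map_subtype_le_ker_map_mkQ (P : Submodule R M) :
    I.map (algebraMap R (AdicCompletion I R)) • LinearMap.range (map I P.subtype) ≤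
      LinearMap.ker (map I (I • P).mkQ) := by
  rw [← Submodule.restrictScalars_le R, Ideal.smul_restrictScalars]
  refine Submodule.smul_le.mpr ?_
  rintro r hr _ ⟨y, rfl⟩
  rw [Submodule.restrictScalars_mem, LinearMap.mem_ker, LinearMap.map_smul_of_tower,
    map_comp_apply]
  refine smul_map_apply_eq_zero (fun p ↦ ?_) y
  rw [LinearMap.comp_apply, Submodule.mkQ_apply, ← Submodule.Quotient.mk_smul,
    Submodule.Quotient.mk_eq_zero]
  exact Submodule.smul_mem_smul hr p.2

theorem mem_smul_of_of_mem_smul_range_map_subtype {P : Submodule R M}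
    [IsHausdorff I (M ⧸ I • P)] {x : M}
    (hx : of I M x ∈
      I.map (algebraMap R (AdicCompletion I R)) • LinearMap.range (map I P.subtype)) :
    x ∈ I • P := by
  have hmk : of I (M ⧸ I • P) ((I • P).mkQ x) = 0 := by
    rw [← map_of]
    exact smul_range_map_subtype_le_ker_map_mkQ P hx
  have := of_injective I (M ⧸ I • P) (hmk.trans (_root_.map_zero (of I (M ⧸ I • P))).symm)
  rwa [Submodule.mkQ_apply, Submodule.Quotient.mk_eq_zero] at this

theorem le_comap_of_range_map_subtype (P : Submodule R M) :
    P ≤ ((LinearMap.range (map I P.subtype)).restrictScalars R).comap (of I M) :=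
  fun m hm ↦ ⟨of I P ⟨m, hm⟩, map_of I P.subtype ⟨m, hm⟩⟩

end AdicCompletion

theorem completion_of_burch_submodule_is_burch
    (R : Type) [CommRing R] [IsNoetherianRing R] [IsLocalRing R]
    (T : Type) [AddCommGroup T] [Module R T] [Module.Finite R T]
    (M : Submodule R T)
    (hburch : IsBurchSubmoduleWrt R (maximalIdeal R) M) :
    Function.Injective
      (AdicCompletion.map (maximalIdeal R) (M.subtype)) ∧
    IsBurchSubmoduleWrt (AdicCompletion (maximalIdeal R) R)
      ((maximalIdeal R).map
        (algebraMap R (AdicCompletion (maximalIdeal R) R)))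
      (LinearMap.range (AdicCompletion.map (maximalIdeal R) (M.subtype))) := by
  refine ⟨AdicCompletion.map_injective _ M.injective_subtype, fun hle ↦ hburch fun x hx ↦ ?_⟩
  have : IsHausdorff (maximalIdeal R) (T ⧸ maximalIdeal R • M) :=
    .of_isLocalRing _ _ (maximalIdeal.isMaximal R).ne_top
  have hx_completed := Submodule.smul_le_comap_restrictScalars_map_smul
    (colonSubmodule_le_comap_restrictScalars_colonSubmodule
      (AdicCompletion.le_comap_of_range_map_subtype (I := maximalIdeal R) M)) hx
  exact AdicCompletion.mem_smul_of_of_mem_smul_range_map_subtype (hle hx_completed)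

end
end

section
/- Let (R, m) be a commutative Noetherian local ring and let M be a finitely generated R-module which is torsion-free and generically free, i.e., M_p is a free R_p-module for every associated prime p of R. Then the m-adic completion M̂ is a torsion-free module over the completion R̂. -/
noncomputable section

open CategoryTheory IsLocalRing

/-! A torsion-free, generically free module `M` embeds into a free module. Every maximal
ideal of the total ring of fractions `Q` of `R` contracts to an associated prime of `R`, so
`M ⊗ Q` is locally free at all maximal ideals, hence projective, hence a submodule of some `Qⁿ`;
clearing the denominators of finitely many generators turns `M ↪ M ⊗ Q ↪ Qⁿ` (the first map is
injective since `M` is torsion-free) into `M ↪ Rⁿ`. Adic completion preserves injectivity of maps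
into finite modules over a Noetherian ring, so `M̂ ↪ R̂ⁿ`, and submodules of free modules are
torsion-free. -/

open nonZeroDivisors

open Module.associatedPrimes in
theorem IsFractionRing.comap_mem_associatedPrimes_of_isMaximal {R K : Type*} [CommRing R]
    [IsNoetherianRing R] [CommRing K] [Algebra R K] [IsFractionRing R K]
    (P : Ideal K) [P.IsMaximal] : P.comap (algebraMap R K) ∈ associatedPrimes R R := by
  have : IsNoetherianRing K := IsLocalization.isNoetherianRing R⁰ K inferInstance
  have : IsFractionRing K K := IsFractionRing.idem R K
  exact comap_mem_associatedPrimes_of_mem_associatedPrimes_of_isLocalizedModule_of_fg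
    R⁰ (Algebra.linearMap R K) P (Ideal.IsMaximal.mem_associatedPrimes_of_isFractionRing K P)
    (IsNoetherian.noetherian _)

theorem Module.Projective.exists_injective_fin (R P : Type*) [CommRing R] [AddCommGroup P]
    [Module R P] [Module.Finite R P] [Module.Projective R P] :
    ∃ (n : ℕ) (f : P →ₗ[R] Fin n → R), Function.Injective f := by
  obtain ⟨n, π, hπ⟩ := Module.Finite.exists_fin' R P
  obtain ⟨s, hs⟩ := π.exists_rightInverse_of_surjective (LinearMap.range_eq_top.mpr hπ)
  exact ⟨n, s, Function.LeftInverse.injective (g := π) (LinearMap.congr_fun hs)⟩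

theorem IsLocalizedModule.exists_injective_of_injective {R : Type*} [CommRing R]
    (S : Submonoid R) {M F F' : Type*} [AddCommGroup M] [Module R M] [Module.Finite R M]
    [AddCommGroup F] [Module R F] [AddCommGroup F'] [Module R F'] (g : F →ₗ[R] F')
    [IsLocalizedModule S g]
    (hg : Function.Injective g) (φ : M →ₗ[R] F') (hφ : Function.Injective φ) :
    ∃ ψ : M →ₗ[R] F, Function.Injective ψ := by
  obtain ⟨k, v, hv⟩ := Module.Finite.exists_fin (R := R) (M := M)
  obtain ⟨c, hc⟩ := exist_integer_multiples_of_finite S g (fun i => φ (v i))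
  have hrange : LinearMap.range ((c : R) • φ) ≤ LinearMap.range g := by
    rw [LinearMap.range_eq_map, ← hv, Submodule.map_span_le]
    rintro _ ⟨i, rfl⟩
    exact hc i
  have hcφ : Function.Injective ((c : R) • φ) := (smul_injective g c).comp hφ
  refine ⟨(LinearEquiv.ofInjective g hg).symm ∘ₗ Submodule.inclusion hrange ∘ₗ
    ((c : R) • φ).rangeRestrict, ?_⟩
  exact (LinearEquiv.ofInjective g hg).symm.injective.comp
    ((Submodule.inclusion_injective hrange).comp
      (((c : R) • φ).injective_rangeRestrict_iff.mpr hcφ))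

def IsGenericallyFree (R M : Type*) [CommRing R] [AddCommGroup M] [Module R M] : Prop :=
  ∀ (p : Ideal R) [p.IsPrime], p ∈ associatedPrimes R R →
    Module.Free (Localization.AtPrime p) (LocalizedModule p.primeCompl M)

theorem IsGenericallyFree.projective_localizedModule {R M : Type*} [CommRing R]
    [IsNoetherianRing R] [AddCommGroup M] [Module R M] [Module.Finite R M]
    (h : IsGenericallyFree R M) : Module.Projective (FractionRing R) (LocalizedModule R⁰ M) := by
  have : IsNoetherianRing (FractionRing R) := IsLocalization.isNoetherianRing R⁰ _ inferInstance
  have : Module.Finite (FractionRing R) (LocalizedModule R⁰ M) :=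
    Module.Finite.of_isLocalizedModule R⁰ (LocalizedModule.mkLinearMap R⁰ M)
  have : Module.FinitePresentation (FractionRing R) (LocalizedModule R⁰ M) :=
    Module.finitePresentation_of_finite _ _
  refine Module.projective_of_localization_maximal fun P hP => ?_
  have hfree :
      ⟨P, hP.isPrime⟩ ∈ Module.freeLocus (FractionRing R) (LocalizedModule R⁰ M) := by
    rw [Module.freeLocus_localization]
    exact h _ (IsFractionRing.comap_mem_associatedPrimes_of_isMaximal P)
  have := Module.mem_freeLocus.mp hfree
  infer_instance

theorem IsGenericallyFree.exists_injective_fin {R M : Type} [CommRing R] [IsNoetherianRing R]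
    [AddCommGroup M] [Module R M] [Module.Finite R M] (htf : IsTorsionFreeMod R M)
    (h : IsGenericallyFree R M) : ∃ (n : ℕ) (f : M →ₗ[R] Fin n → R), Function.Injective f := by
  have := h.projective_localizedModule
  obtain ⟨n, s, hs⟩ :=
    Module.Projective.exists_injective_fin (FractionRing R) (LocalizedModule R⁰ M)
  have hM : Function.Injective (LocalizedModule.mkLinearMap R⁰ M) :=
    (IsLocalizedModule.injective_iff_isRegular R⁰ _).mpr fun c =>
      isSMulRegular_iff_right_eq_zero_of_smul.mpr (htf c c.2)
  have hR : Function.Injective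
      (LinearMap.pi fun i : Fin n => Algebra.linearMap R (FractionRing R) ∘ₗ LinearMap.proj i) :=
    fun x y hxy => funext fun i => IsFractionRing.injective R _ (congrFun hxy i)
  exact ⟨n, IsLocalizedModule.exists_injective_of_injective R⁰ _ hR
    (s.restrictScalars R ∘ₗ LocalizedModule.mkLinearMap R⁰ M) (hs.comp hM)⟩

theorem IsTorsionFreeMod.of_injective {R M N : Type} [CommRing R] [AddCommGroup M] [Module R M]
    [AddCommGroup N] [Module R N] (hN : IsTorsionFreeMod R N) (f : M →ₗ[R] N)
    (hf : Function.Injective f) : IsTorsionFreeMod R M := fun r hr x hx =>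
  hf <| by rw [map_zero]; exact hN r hr (f x) (by rw [← map_smul, hx, map_zero])

theorem isTorsionFreeMod_pi (R ι : Type) [CommRing R] : IsTorsionFreeMod R (ι → R) :=
  fun r hr x hx => funext fun i =>
    (mem_nonZeroDivisors_iff_right.mp hr) (x i) (by simpa [mul_comm] using congrFun hx i)

theorem AdicCompletion.isTorsionFreeMod_of_injective_fin {R M : Type} [CommRing R]
    [IsNoetherianRing R] [AddCommGroup M] [Module R M] (I : Ideal R) {n : ℕ}
    (f : M →ₗ[R] Fin n → R) (hf : Function.Injective f) :
    IsTorsionFreeMod (AdicCompletion I R) (AdicCompletion I M) :=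
  (isTorsionFreeMod_pi _ (Fin n)).of_injective ((piEquivFin I n).toLinearMap ∘ₗ map I f)
    ((piEquivFin I n).injective.comp (map_injective I hf))

theorem completion_of_torsionfree_generically_free_is_torsionfree
    (R : Type) [CommRing R] [IsNoetherianRing R] [IsLocalRing R]
    (M : Type) [AddCommGroup M] [Module R M] [Module.Finite R M]
    (htf : IsTorsionFreeMod R M)
    (hgenfree : ∀ (p : Ideal R) [p.IsPrime], p ∈ associatedPrimes R R →
      Module.Free (Localization.AtPrime p) (LocalizedModule p.primeCompl M)) :
    IsTorsionFreeMod (AdicCompletion (maximalIdeal R) R)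
      (AdicCompletion (maximalIdeal R) M) := by
  obtain ⟨n, f, hf⟩ := IsGenericallyFree.exists_injective_fin htf hgenfree
  exact AdicCompletion.isTorsionFreeMod_of_injective_fin (maximalIdeal R) f hf

end
end

section
/- Let (R, m) be a commutative Noetherian local ring and let M be a finitely generated R-module which has rank r, i.e., M_p ≅ R_p^r for every associated prime p of R. Then the m-adic completion M̂ has rank r over R̂, i.e., M̂_q ≅ R̂_q^r for every associated prime q of R̂. -/
noncomputable section

open CategoryTheory IsLocalRing

/-!
The completion `R̂` is flat over `R` and `M̂ ≅ R̂ ⊗[R] M`. Flatness forces every associated prime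
`q` of `R̂` to contract into an associated prime `P` of `R`: the contraction `q ∩ R` kills a nonzero
element of `R̂`, hence, by the equational criterion for flatness, a nonzero element of `R`.
Then `R_P → R̂_q` is defined and `M̂_q ≅ R̂_q ⊗[R_P] M_P ≅ R̂_q ^ r`.
-/

open Submodule TensorProduct

theorem Submodule.exists_ne_zero_le_colon_of_pow_le_colon {A M : Type*} [CommRing A]
    [AddCommGroup M] [Module A M] {J : Ideal A} (n : ℕ) {x : M} (hx : x ≠ 0)
    (hJx : J ^ n ≤ (⊥ : Submodule A M).colon {x}) :
    ∃ y : M, y ≠ 0 ∧ J ≤ (⊥ : Submodule A M).colon {y} := by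
  induction n generalizing x with
  | zero =>
    have h1 := hJx (by simp : (1 : A) ∈ J ^ 0)
    simp only [mem_colon_singleton, one_smul, mem_bot] at h1
    exact absurd h1 hx
  | succ n ih =>
    by_cases hJ : J ≤ (⊥ : Submodule A M).colon {x}
    · exact ⟨x, hx, hJ⟩
    obtain ⟨a, haJ, hax⟩ := SetLike.not_le_iff_exists.mp hJ
    rw [mem_colon_singleton, mem_bot] at hax
    refine ih hax fun b hb => ?_
    have hba : b * a ∈ J ^ (n + 1) := pow_succ J n ▸ Ideal.mul_mem_mul hb haJ
    simpa [mem_colon_singleton, smul_smul] using hJx hba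

theorem Module.Flat.exists_ne_zero_le_colon_of_le_colon {R M : Type*} [CommRing R]
    [AddCommGroup M] [Module R M] [Module.Flat R M] {I : Ideal R} (hI : I.FG) {x : M}
    (hx : x ≠ 0) (hIx : I ≤ (⊥ : Submodule R M).colon {x}) :
    ∃ y : R, y ≠ 0 ∧ I ≤ (⊥ : Submodule R R).colon {y} := by
  have : Module.Finite R I := Module.Finite.iff_fg.mpr hI
  have hcomp : LinearMap.toSpanSingleton R M x ∘ₗ I.subtype = 0 := by
    ext ⟨r, hr⟩
    simpa [mem_colon_singleton] using hIx hr
  obtain ⟨k, a, z, hxza, haI⟩ := exists_factorization_of_comp_eq_zero_of_free hcomp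
  have ha1 : a 1 ≠ 0 := fun h => hx (by simpa [h] using congr($hxza 1))
  obtain ⟨j, hj⟩ : ∃ j, a 1 j ≠ 0 := by
    by_contra! h
    exact ha1 (Finsupp.ext h)
  refine ⟨a 1 j, hj, fun r hr => ?_⟩
  have har : a r = 0 := congr($haI ⟨r, hr⟩)
  rw [← mul_one r, ← smul_eq_mul, map_smul] at har
  simpa [mem_colon_singleton] using congr($har j)

theorem IsAssociatedPrime.exists_comap_le_mem_associatedPrimes {R A : Type*} [CommRing R]
    [IsNoetherianRing R] [CommRing A] [Algebra R A] [Module.Flat R A] {q : Ideal A}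
    (hq : IsAssociatedPrime q A) :
    ∃ P ∈ associatedPrimes R R, q.comap (algebraMap R A) ≤ P := by
  obtain ⟨hq_prime, x, rfl⟩ := hq
  have hx : x ≠ 0 := by
    rintro rfl
    exact hq_prime.ne_top (by simp [Ideal.radical_eq_top])
  set p := ((⊥ : Submodule A A).colon {x}).radical.comap (algebraMap R A)
  have hp : p.FG := IsNoetherian.noetherian p
  obtain ⟨n, hn⟩ := Ideal.exists_pow_le_of_le_radical_of_fg Ideal.map_comap_le (hp.map _)
  obtain ⟨x', hx', hpx'⟩ := exists_ne_zero_le_colon_of_pow_le_colon n hx hn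
  have hpx'R : p ≤ (⊥ : Submodule R A).colon {x'} := fun r hr => by
    simpa [mem_colon_singleton, Algebra.smul_def] using hpx' (Ideal.mem_map_of_mem _ hr)
  obtain ⟨y, hy, hpy⟩ := Module.Flat.exists_ne_zero_le_colon_of_le_colon hp hx' hpx'R
  obtain ⟨P, hP, hyP⟩ := exists_le_isAssociatedPrime_of_isNoetherianRing R y hy
  exact ⟨P, hP, hpy.trans hyP⟩

def TensorProduct.piEquivOfIsScalarTower {R S B M ι : Type*} [CommRing R] [CommRing S]
    [CommRing B] [Algebra R S] [Algebra S B] [Algebra R B] [IsScalarTower R S B]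
    [AddCommGroup M] [Module R M] [Fintype ι] [DecidableEq ι]
    (e : S ⊗[R] M ≃ₗ[S] (ι → S)) : B ⊗[R] M ≃ₗ[B] (ι → B) :=
  (AlgebraTensorModule.cancelBaseChange R S B B M).symm ≪≫ₗ
    AlgebraTensorModule.congr (LinearEquiv.refl B B) e ≪≫ₗ piScalarRight S B B ι

theorem nonempty_localizedModule_equiv_pi_of_comap_le {R A M N : Type*} [CommRing R]
    [CommRing A] [Algebra R A] [AddCommGroup M] [Module R M] [AddCommGroup N] [Module A N]
    (eN : A ⊗[R] M ≃ₗ[A] N) {q : Ideal A} [q.IsPrime] {P : Ideal R} [P.IsPrime]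
    (hqP : q.comap (algebraMap R A) ≤ P) {r : ℕ}
    (e : LocalizedModule P.primeCompl M ≃ₗ[Localization.AtPrime P]
      (Fin r → Localization.AtPrime P)) :
    Nonempty (LocalizedModule q.primeCompl N ≃ₗ[Localization.AtPrime q]
      (Fin r → Localization.AtPrime q)) := by
  let f : Localization.AtPrime P →+* Localization.AtPrime q :=
    IsLocalization.map (M := P.primeCompl) (T := q.primeCompl) _ (algebraMap R A)
      fun _ hy hyq => hy (hqP hyq)
  let _ := f.toAlgebra
  have : IsScalarTower R (Localization.AtPrime P) (Localization.AtPrime q) :=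
    .of_algebraMap_eq' <| by
      rw [IsScalarTower.algebraMap_eq R A (Localization.AtPrime q)]
      exact (IsLocalization.map_comp _).symm
  let eM : Localization.AtPrime P ⊗[R] M ≃ₗ[Localization.AtPrime P]
      LocalizedModule P.primeCompl M :=
    (IsLocalizedModule.isBaseChange P.primeCompl _ (LocalizedModule.mkLinearMap _ M)).equiv
  exact ⟨(IsLocalizedModule.isBaseChange q.primeCompl _
      (LocalizedModule.mkLinearMap q.primeCompl N)).equiv.symm ≪≫ₗ
    AlgebraTensorModule.congr (LinearEquiv.refl _ _) eN.symm ≪≫ₗ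
    AlgebraTensorModule.cancelBaseChange R A _ _ M ≪≫ₗ
    piEquivOfIsScalarTower (eM ≪≫ₗ e)⟩

theorem completion_preserves_rank
    (R : Type) [CommRing R] [IsNoetherianRing R] [IsLocalRing R]
    (M : Type) [AddCommGroup M] [Module R M] [Module.Finite R M]
    (r : ℕ) (hrank : HasRankN R M r) :
    HasRankN (AdicCompletion (maximalIdeal R) R)
      (AdicCompletion (maximalIdeal R) M) r := by
  intro q _ hq
  obtain ⟨P, hP, hqP⟩ := IsAssociatedPrime.exists_comap_le_mem_associatedPrimes (R := R) hq
  have : P.IsPrime := hP.isPrime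
  obtain ⟨e⟩ := hrank P hP
  exact nonempty_localizedModule_equiv_pi_of_comap_le
    (AdicCompletion.ofTensorProductEquivOfFiniteNoetherian (maximalIdeal R) M) hqP e

end
end
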